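/- Let R be a complete DVR and G a flat affine group scheme over R. Then the divisible ideal d(R[G]) = ⋂_n π^n R[G] is a Hopf ideal; i.e., the closed subscheme Haus(G) of G defined by d(R[G]) is a closed flat subgroup scheme of G. -/

import Mathlib

/-!
Write `d(M) = ⋂ₙ πⁿ M`, so that `I = d(A)` and `A ⧸ I` is the π-adic Hausdorffification `Q` of
`A`. Linear maps send `d(M)` into `d(N)`, and `d(N) = 0` when `N` is separated; hence
`ε(I) ⊆ d(R) = 0`, `S(I) ⊆ I`, and `Δ(I)` lies in the kernel `I ⊗ A + A ⊗ I` of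
`A ⊗ A → Q ⊗ Q` as soon as `Q ⊗ Q` is separated. `Q` is torsion-free, hence flat.

Separatedness of `M ⊗ N` (`M` torsion-free, `N` flat, both separated) is where completeness of
`R` enters. An element of `M ⊗ N` comes from `C ⊗ N`, with `C` the saturation of a finitely
generated submodule of `M`; the cokernel of `C ⊗ N ↪ M ⊗ N` is torsion-free, so divisibility
descends to `C ⊗ N`. Finally `C` is finite free, so `C ⊗ N ≅ N^(ι)` is separated: splitting off
saturated cyclic submodules one generator at a time keeps the quotient separated because the
cyclic submodule, a quotient of the complete ring `R`, is precomplete.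
-/

open TensorProduct

section CommRing

variable {R M N : Type*} [CommRing R] [AddCommGroup M] [Module R M] [AddCommGroup N] [Module R N]
  {I : Ideal R}

theorem Submodule.map_iInf_pow_smul_top_le (f : M →ₗ[R] N) :
    (⨅ n : ℕ, I ^ n • ⊤ : Submodule R M).map f ≤ ⨅ n : ℕ, I ^ n • ⊤ :=
  le_iInf fun n ↦ (Submodule.map_mono (iInf_le _ n)).trans <| by
    rw [Submodule.map_smul'']
    exact Submodule.smul_mono le_rfl le_top

theorem IsHausdorff.map_iInf_pow_smul_top_eq_bot [IsHausdorff I N] (f : M →ₗ[R] N) :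
    (⨅ n : ℕ, I ^ n • ⊤ : Submodule R M).map f = ⊥ :=
  eq_bot_iff.mpr <| (Submodule.map_iInf_pow_smul_top_le f).trans (IsHausdorff.iInf_pow_smul ‹_›).le

theorem IsHausdorff.of_forall_eq_zero {ι : Type*} {N : ι → Type*} [∀ i, AddCommGroup (N i)]
    [∀ i, Module R (N i)] [∀ i, IsHausdorff I (N i)] (f : ∀ i, M →ₗ[R] N i)
    (hf : ∀ x, (∀ i, f i x = 0) → x = 0) : IsHausdorff I M where
  haus' x hx := hf x fun i ↦ by
    have hx : x ∈ (⨅ n : ℕ, I ^ n • ⊤ : Submodule R M) :=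
      Submodule.mem_iInf _ |>.mpr fun n ↦ SModEq.zero.mp (hx n)
    simpa using (IsHausdorff.map_iInf_pow_smul_top_eq_bot (f i)).le (Submodule.mem_map_of_mem hx)

theorem IsHausdorff.of_injective [IsHausdorff I N] (f : M →ₗ[R] N) (hf : Function.Injective f) :
    IsHausdorff I M :=
  .of_forall_eq_zero (fun _ : Unit ↦ f) fun x hx ↦ hf <| by simpa using hx ()

instance IsHausdorff.finsupp {ι : Type*} [IsHausdorff I M] : IsHausdorff I (ι →₀ M) :=
  .of_forall_eq_zero (Finsupp.lapply (R := R) (M := M)) fun _ hx ↦ Finsupp.ext hx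

theorem IsPrecomplete.of_surjective [IsPrecomplete I M] (f : M →ₗ[R] N)
    (hf : Function.Surjective f) : IsPrecomplete I N := by
  refine AdicCompletion.of_surjective_iff.mp fun y ↦ ?_
  obtain ⟨z, rfl⟩ := AdicCompletion.map_surjective I hf y
  obtain ⟨x, rfl⟩ := AdicCompletion.of_surjective I M z
  exact ⟨f x, (AdicCompletion.map_of I f x).symm⟩

instance IsPrecomplete.span_singleton [IsPrecomplete I R] (m : M) : IsPrecomplete I (R ∙ m) := by
  rw [LinearMap.span_singleton_eq_range]
  exact .of_surjective _ (LinearMap.toSpanSingleton R M m).surjective_rangeRestrict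

theorem mem_span_singleton_pow_smul_top {π : R} {n : ℕ} {x : M} :
    x ∈ (Ideal.span {π} ^ n • ⊤ : Submodule R M) ↔ ∃ y, π ^ n • y = x := by
  rw [Ideal.span_singleton_pow, Submodule.ideal_span_singleton_smul,
    Submodule.mem_smul_pointwise_iff_exists]
  simp

theorem Ideal.restrictScalars_iInf_span_algebraMap_pow {A : Type*} [CommRing A] [Algebra R A]
    (π : R) : (⨅ n : ℕ, Ideal.span {algebraMap R A π ^ n}).restrictScalars R =
      (⨅ n : ℕ, Ideal.span {π} ^ n • ⊤ : Submodule R A) := by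
  ext a
  simp only [Submodule.restrictScalars_mem, Submodule.mem_iInf]
  refine forall_congr' fun n ↦ ?_
  rw [mem_span_singleton_pow_smul_top, ← map_pow, Ideal.mem_span_singleton']
  simp only [Algebra.smul_def, mul_comm]

theorem isHausdorff_span_singleton_iff {π : R} :
    IsHausdorff (Ideal.span {π}) M ↔ ∀ x : M, (∀ n : ℕ, ∃ y, π ^ n • y = x) → x = 0 := by
  simp only [isHausdorff_iff, SModEq.zero, mem_span_singleton_pow_smul_top]

theorem isSMulRegular_hausdorffification {π : R} (hM : IsSMulRegular M π) :
    IsSMulRegular (Hausdorffification (Ideal.span {π}) M) π := by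
  refine (isSMulRegular_quotient_iff_mem_of_smul_mem _ _).mpr fun x hx ↦ ?_
  simp only [Submodule.mem_iInf, mem_span_singleton_pow_smul_top] at hx ⊢
  intro n
  obtain ⟨y, hy⟩ := hx (n + 1)
  exact ⟨y, hM <| show π • _ = π • _ by rwa [← mul_smul, ← pow_succ']⟩

theorem isHausdorff_quotient_of_isSMulRegular {π : R} [IsHausdorff (Ideal.span {π}) M]
    {N : Submodule R M} [IsPrecomplete (Ideal.span {π}) N] (hN : IsSMulRegular (M ⧸ N) π) :
    IsHausdorff (Ideal.span {π}) (M ⧸ N) := by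
  refine isHausdorff_span_singleton_iff.mpr fun q hq ↦ ?_
  obtain ⟨x, rfl⟩ := N.mkQ_surjective q
  have hdiv (n : ℕ) : ∃ a : M, x - π ^ n • a ∈ N := by
    obtain ⟨y, hy⟩ := hq n
    obtain ⟨a, rfl⟩ := N.mkQ_surjective y
    exact ⟨a, (Submodule.Quotient.eq N).mp (by simpa using hy.symm)⟩
  choose a ha using hdiv
  let c (n : ℕ) : N := ⟨x - π ^ n • a n, ha n⟩
  -- saturation makes `c` Cauchy in `N` itself, not merely in `M`
  have hc {i j : ℕ} (hij : i ≤ j) : c i ≡ c j [SMOD (Ideal.span {π} ^ i • ⊤ : Submodule R N)] := by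
    have hw : π ^ i • (π ^ (j - i) • a j - a i) ∈ N := by
      convert N.sub_mem (ha i) (ha j) using 1
      rw [smul_sub, ← mul_smul, ← pow_add, Nat.add_sub_cancel' hij]
      abel
    refine SModEq.sub_mem.mpr <| mem_span_singleton_pow_smul_top.mpr
      ⟨⟨_, mem_of_isSMulRegular_quotient_of_smul_mem (hN.pow i) hw⟩, Subtype.ext ?_⟩
    simp only [SetLike.val_smul, smul_sub, ← mul_smul, ← pow_add, Nat.add_sub_cancel' hij,
      Submodule.coe_sub, c]
    abel
  obtain ⟨L, hL⟩ := IsPrecomplete.prec ‹_› hc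
  have hxL : x - L = 0 := by
    refine isHausdorff_span_singleton_iff.mp ‹_› _ fun n ↦ ?_
    obtain ⟨z, hz⟩ := mem_span_singleton_pow_smul_top.mp (SModEq.sub_mem.mp (hL n))
    refine ⟨a n + z, ?_⟩
    rw [smul_add, ← Submodule.coe_smul, hz]
    simp only [Submodule.coe_sub, c]
    abel
  simp [sub_eq_zero.mp hxL]

theorem isHausdorff_tensorProduct_of_free {F : Type*} [AddCommGroup F] [Module R F]
    [Module.Free R F] [IsHausdorff I N] : IsHausdorff I (F ⊗[R] N) := by
  classical
  exact .of_injective ((TensorProduct.congr (Module.Free.chooseBasis R F).repr (.refl R N)).trans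
    (finsuppScalarLeft R N _)).toLinearMap (LinearEquiv.injective _)

theorem eq_zero_of_exact_of_isSMulRegular {P : Type*} [AddCommGroup P] [Module R P] {π : R}
    {f : N →ₗ[R] M} {g : M →ₗ[R] P} (hfg : Function.Exact f g) (hf : Function.Injective f)
    [IsHausdorff (Ideal.span {π}) N] (hP : IsSMulRegular P π) {x : N}
    (hx : ∀ n : ℕ, ∃ y, π ^ n • y = f x) : x = 0 := by
  refine isHausdorff_span_singleton_iff.mp ‹_› x fun n ↦ ?_
  obtain ⟨y, hy⟩ := hx n
  have hgy : g y = 0 := (hP.pow n).right_eq_zero_of_smul <| by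
    rw [← map_smul, hy, hfg.apply_apply_eq_zero]
  obtain ⟨z, rfl⟩ := (hfg y).mp hgy
  exact ⟨z, hf (by rw [map_smul, hy])⟩

namespace Submodule

def saturation (π : R) (N : Submodule R M) : Submodule R M where
  carrier := {m | ∃ n : ℕ, π ^ n • m ∈ N}
  add_mem' := by
    rintro a b ⟨i, ha⟩ ⟨j, hb⟩
    refine ⟨i + j, ?_⟩
    rw [smul_add, pow_add, mul_smul, mul_smul, smul_comm (π ^ i) (π ^ j) a]
    exact N.add_mem (N.smul_mem _ ha) (N.smul_mem _ hb)
  zero_mem' := ⟨0, by simp⟩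
  smul_mem' c m := fun ⟨n, hn⟩ ↦ ⟨n, by rw [smul_comm]; exact N.smul_mem c hn⟩

variable {π : R} {N : Submodule R M}

theorem mem_saturation {m : M} : m ∈ N.saturation π ↔ ∃ n : ℕ, π ^ n • m ∈ N := Iff.rfl

theorem le_saturation : N ≤ N.saturation π := fun m hm ↦ ⟨0, by simpa using hm⟩

theorem isSMulRegular_quotient_saturation : IsSMulRegular (M ⧸ N.saturation π) π :=
  (isSMulRegular_quotient_iff_mem_of_smul_mem _ _).mpr fun _ ⟨n, hn⟩ ↦
    ⟨n + 1, by rwa [pow_succ, mul_smul]⟩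

end Submodule

end CommRing

section DiscreteValuationRing

variable {R M : Type*} [CommRing R] [IsDomain R] [IsDiscreteValuationRing R] {π : R}
  [AddCommGroup M] [Module R M]

theorem Module.isTorsionFree_of_isSMulRegular (hπ : Irreducible π) (hM : IsSMulRegular M π) :
    Module.IsTorsionFree R M := by
  refine Module.isTorsionFree_iff_smul_eq_zero.mpr fun r m h ↦ or_iff_not_imp_left.mpr fun hr ↦ ?_
  obtain ⟨n, u, rfl⟩ := IsDiscreteValuationRing.eq_unit_mul_pow_irreducible hr hπ
  rw [mul_smul, u.isUnit.smul_eq_zero] at h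
  exact (hM.pow n).right_eq_zero_of_smul h

theorem isSMulRegular_quotient_span_singleton (hπ : Irreducible π) (hM : IsSMulRegular M π)
    {m : M} (hm : ∀ y : M, π • y ≠ m) : IsSMulRegular (M ⧸ R ∙ m) π := by
  refine (isSMulRegular_quotient_iff_mem_of_smul_mem _ _).mpr fun x hx ↦ ?_
  obtain ⟨c, hc⟩ := Submodule.mem_span_singleton.mp hx
  by_cases hcu : IsUnit c
  · obtain ⟨u, rfl⟩ := hcu
    exact absurd (by rw [smul_comm, ← hc, ← Units.smul_def, inv_smul_smul]) (hm ((u⁻¹ : Rˣ) • x))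
  · obtain ⟨d, rfl⟩ := Ideal.mem_span_singleton'.mp <|
      hπ.maximalIdeal_eq ▸ (IsLocalRing.mem_maximalIdeal c).mpr hcu
    exact Submodule.mem_span_singleton.mpr ⟨d, hM <| show π • _ = π • _ by rw [← hc, mul_comm, mul_smul]⟩

theorem exists_mem_span_singleton_isSMulRegular_quotient (hπ : Irreducible π)
    (hM : IsSMulRegular M π) [IsHausdorff (Ideal.span {π}) M] (e : M) :
    ∃ m : M, e ∈ R ∙ m ∧ IsSMulRegular (M ⧸ R ∙ m) π := by
  classical
  by_cases he : e = 0
  · refine ⟨0, by simp [he], (isSMulRegular_quotient_iff_mem_of_smul_mem _ _).mpr fun x hx ↦ ?_⟩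
    simpa using hM.right_eq_zero_of_smul (by simpa using hx)
  have hbdd : ∃ n, ¬ ∃ y : M, π ^ n • y = e :=
    not_forall.mp fun h ↦ he (isHausdorff_span_singleton_iff.mp ‹_› e h)
  -- `m` is `e` divided by the largest power of `π` that divides it
  obtain ⟨k, hk⟩ : ∃ k, Nat.find hbdd = k + 1 :=
    Nat.exists_eq_succ_of_ne_zero fun h ↦ (h ▸ Nat.find_spec hbdd) ⟨e, pow_zero π ▸ one_smul R e⟩
  obtain ⟨m, rfl⟩ := not_not.mp (Nat.find_min hbdd (show k < Nat.find hbdd by omega))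
  refine ⟨m, Submodule.smul_mem _ _ (Submodule.mem_span_singleton_self m),
    isSMulRegular_quotient_span_singleton hπ hM fun y hy ↦ ?_⟩
  exact Nat.find_spec hbdd ⟨y, by rw [hk, pow_succ, mul_smul, hy]⟩

theorem Module.Finite.of_forall_smul_pow_mem_span (hπ : Irreducible π)
    [IsPrecomplete (Ideal.span {π}) R] {k : ℕ} (t : Fin k → M) (hM : IsSMulRegular M π)
    [IsHausdorff (Ideal.span {π}) M]
    (ht : ∀ m : M, ∃ n : ℕ, π ^ n • m ∈ Submodule.span R (Set.range t)) :
    Module.Finite R M := by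
  induction k generalizing M with
  | zero =>
    have : Subsingleton M := ⟨fun x y ↦ by
      obtain ⟨n, hn⟩ := ht (x - y)
      simp only [Set.range_eq_empty, Submodule.span_empty, Submodule.mem_bot] at hn
      exact sub_eq_zero.mp <| (hM.pow n).right_eq_zero_of_smul hn⟩
    infer_instance
  | succ k ih =>
    obtain ⟨m, hm, hreg⟩ := exists_mem_span_singleton_isSMulRegular_quotient hπ hM (t 0)
    have := isHausdorff_quotient_of_isSMulRegular hreg
    have : Module.Finite R (M ⧸ R ∙ m) := by
      refine ih (fun i ↦ (R ∙ m).mkQ (t i.succ)) hreg fun q ↦ ?_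
      obtain ⟨x, rfl⟩ := (R ∙ m).mkQ_surjective q
      obtain ⟨n, hn⟩ := ht x
      refine ⟨n, ?_⟩
      rw [← map_smul]
      refine Submodule.span_le.mpr ?_ (Submodule.map_span (R ∙ m).mkQ _ ▸
        Submodule.mem_map_of_mem hn)
      rintro _ ⟨_, ⟨i, rfl⟩, rfl⟩
      cases i using Fin.cases with
      | zero => simp [(Submodule.Quotient.mk_eq_zero _).mpr hm]
      | succ i => exact Submodule.subset_span ⟨i, rfl⟩
    exact .of_exact (LinearMap.exact_subtype_mkQ (R ∙ m)) (R ∙ m).mkQ_surjective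

theorem Submodule.FG.finite_saturation (hπ : Irreducible π) [IsPrecomplete (Ideal.span {π}) R]
    (hM : IsSMulRegular M π) [IsHausdorff (Ideal.span {π}) M] {N : Submodule R M} (hN : N.FG) :
    Module.Finite R (N.saturation π) := by
  obtain ⟨k, t, rfl⟩ := Submodule.fg_iff_exists_fin_generating_family.mp hN
  set C := (Submodule.span R (Set.range t)).saturation π
  have := IsHausdorff.of_injective (I := Ideal.span {π}) C.subtype C.injective_subtype
  let t' (i : Fin k) : C := ⟨t i, Submodule.le_saturation (Submodule.subset_span ⟨i, rfl⟩)⟩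
  refine .of_forall_smul_pow_mem_span hπ t' (hM.submodule C π) ?_
  rintro ⟨m, hm⟩
  obtain ⟨n, hn⟩ := Submodule.mem_saturation.mp hm
  have hrange : C.subtype '' Set.range t' = Set.range t := by
    rw [← Set.range_comp]; rfl
  rw [← hrange, ← Submodule.map_span] at hn
  obtain ⟨z, hz, hzm⟩ := Submodule.mem_map.mp hn
  obtain rfl : z = π ^ n • ⟨m, hm⟩ := C.injective_subtype hzm
  exact ⟨n, hz⟩

theorem isHausdorff_tensorProduct (hπ : Irreducible π) [IsPrecomplete (Ideal.span {π}) R]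
    {N : Type*} [AddCommGroup N] [Module R N] (hM : IsSMulRegular M π)
    [IsHausdorff (Ideal.span {π}) M] [Module.Flat R N] [IsHausdorff (Ideal.span {π}) N] :
    IsHausdorff (Ideal.span {π}) (M ⊗[R] N) := by
  refine isHausdorff_span_singleton_iff.mpr fun x hx ↦ ?_
  obtain ⟨M₀, hM₀, x₀, rfl⟩ := Submodule.exists_fg_le_eq_rTensor_subtype x
  set C := M₀.saturation π
  have : Module.Finite R C := hM₀.finite_saturation hπ hM
  have : Module.IsTorsionFree R C := Module.isTorsionFree_of_isSMulRegular hπ (hM.submodule C π)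
  have : Module.IsTorsionFree R (M ⧸ C) :=
    Module.isTorsionFree_of_isSMulRegular hπ Submodule.isSMulRegular_quotient_saturation
  have := isHausdorff_tensorProduct_of_free (I := Ideal.span {π}) (F := C) (N := N)
  have hinc : M₀.subtype = C.subtype ∘ₗ Submodule.inclusion Submodule.le_saturation := rfl
  rw [hinc, LinearMap.rTensor_comp_apply] at hx ⊢
  rw [eq_zero_of_exact_of_isSMulRegular
    (rTensor_exact N (LinearMap.exact_subtype_mkQ C) C.mkQ_surjective)
    (Module.Flat.rTensor_preserves_injective_linearMap _ C.injective_subtype)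
    (Module.IsTorsionFree.isSMulRegular (.of_ne_zero hπ.ne_zero)) hx, map_zero]

end DiscreteValuationRing

theorem stmt12 {R : Type} [CommRing R] [IsDomain R] [IsDiscreteValuationRing R]
    (π : R) (hπ : Irreducible π) [IsAdicComplete (Ideal.span {π}) R]
    {A : Type} [CommRing A] [HopfAlgebra R A] [Module.Flat R A]
    (I : Ideal A) (hI : I = ⨅ n : ℕ, Ideal.span {(algebraMap R A π) ^ n}) :
    (∀ a ∈ I, Coalgebra.counit (R := R) (A := A) a = (0 : R)) ∧
    (∀ a ∈ I, Coalgebra.comul (R := R) (A := A) a ∈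
        LinearMap.range
          (TensorProduct.map (I.restrictScalars R).subtype (LinearMap.id : A →ₗ[R] A)) ⊔
        LinearMap.range
          (TensorProduct.map (LinearMap.id : A →ₗ[R] A) (I.restrictScalars R).subtype)) ∧
    (∀ a ∈ I, HopfAlgebra.antipode (R := R) (A := A) a ∈ I) ∧
    Module.Flat R (A ⧸ I) := by
  set D : Submodule R A := ⨅ n : ℕ, Ideal.span {π} ^ n • ⊤
  have hID : I.restrictScalars R = D := hI ▸ Ideal.restrictScalars_iInf_span_algebraMap_pow π
  have hmem {a : A} : a ∈ I ↔ a ∈ D := by rw [← hID]; rfl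
  set Q := Hausdorffification (Ideal.span {π}) A
  have hQ : IsSMulRegular Q π := isSMulRegular_hausdorffification
    (Module.IsTorsionFree.isSMulRegular (.of_ne_zero hπ.ne_zero))
  have : Module.IsTorsionFree R Q := Module.isTorsionFree_of_isSMulRegular hπ hQ
  have := isHausdorff_tensorProduct hπ (M := Q) (N := Q) hQ
  refine ⟨fun a ha ↦ ?_, fun a ha ↦ ?_, fun a ha ↦ ?_, ?_⟩
  · exact (IsHausdorff.map_iInf_pow_smul_top_eq_bot Coalgebra.counit).le
      (Submodule.mem_map_of_mem (hmem.mp ha))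
  · have hker := TensorProduct.map_ker (LinearMap.exact_subtype_mkQ D) D.mkQ_surjective
      (LinearMap.exact_subtype_mkQ D) D.mkQ_surjective
    change _ ∈ (LinearMap.rTensor A _).range ⊔ (LinearMap.lTensor A _).range
    rw [hID, sup_comm, ← hker, LinearMap.mem_ker, ← LinearMap.comp_apply]
    simpa using (IsHausdorff.map_iInf_pow_smul_top_eq_bot
      (TensorProduct.map D.mkQ D.mkQ ∘ₗ Coalgebra.comul)).le
      (Submodule.mem_map_of_mem (hmem.mp ha))
  · exact hmem.mpr <| Submodule.map_iInf_pow_smul_top_le (HopfAlgebra.antipode R)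
      (Submodule.mem_map_of_mem (hmem.mp ha))
  · exact .of_linearEquiv ((Submodule.Quotient.restrictScalarsEquiv R I).symm.trans
      (Submodule.quotEquivOfEq _ _ hID))
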